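/- arXiv:1903.04002 — 4 statements merged into one kernel-verified Lean document; each statement's English description precedes it below -/
import Mathlib

section
/- Let V be a two-dimensional vector space over a field k with basis {a1, a2}. Define a bilinear multiplication μ by μ(a1,a1) = a1 and μ(ai,aj) = a2 for all (i,j) ≠ (1,1), and a linear map α1 by α1(a1) = a1 - a2, α1(a2) = 0. Then (V, μ, α1) is a Hom-associative algebra, i.e., α1(μ(x,y)) = μ(α1(x), α1(y)) and μ(α1(x), μ(y,z)) = μ(μ(x,y), α1(z)) for all x, y, z in V. -/
/-! Both identities are multilinear in `x, y, z`, so it suffices to check them on the basis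
`a1, a2`, where they reduce to the multiplication table. -/

namespace LinearMap

variable {R M ι : Type*} [CommSemiring R] [AddCommMonoid M] [Module R M]
  (b : Module.Basis ι R M) (μ : M →ₗ[R] M →ₗ[R] M) (α : M →ₗ[R] M)

theorem map_mul_of_basis (h : ∀ i j, α (μ (b i) (b j)) = μ (α (b i)) (α (b j))) (x y : M) :
    α (μ x y) = μ (α x) (α y) :=
  congr_fun₂ (ext_basis b b h : μ.compr₂ α = μ.compl₁₂ α α) x y

theorem hom_assoc_of_basis
    (h : ∀ i j l, μ (α (b i)) (μ (b j) (b l)) = μ (μ (b i) (b j)) (α (b l))) (x y z : M) :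
    μ (α x) (μ y z) = μ (μ x y) (α z) := by
  have basis_left : ∀ i y z, μ (α (b i)) (μ y z) = μ (μ (b i) y) (α z) := fun i =>
    congr_fun₂ (ext_basis b b (h i) : μ.compr₂ (μ (α (b i))) = (μ ∘ₗ μ (b i)).compl₂ α)
  exact LinearMap.congr_fun (b.ext fun i => basis_left i y z :
    μ.flip (μ y z) ∘ₗ α = μ.flip (α z) ∘ₗ μ.flip y) x

end LinearMap

/-- The two-dimensional example `(V, μ, α1)` with `μ(a1,a1)=a1`, `μ(ai,aj)=a2` otherwise,
`α1(a1)=a1-a2`, `α1(a2)=0`, is a Hom-associative algebra. -/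
theorem hom_associative_example (k : Type*) [Field k]
    (μ : (k × k) →ₗ[k] (k × k) →ₗ[k] (k × k)) (α1 : (k × k) →ₗ[k] (k × k))
    (a1 a2 : k × k) (ha1 : a1 = (1, 0)) (ha2 : a2 = (0, 1))
    (h11 : μ a1 a1 = a1) (h12 : μ a1 a2 = a2)
    (h21 : μ a2 a1 = a2) (h22 : μ a2 a2 = a2)
    (hα1 : α1 a1 = a1 - a2) (hα2 : α1 a2 = 0) :
    (∀ x y : k × k, α1 (μ x y) = μ (α1 x) (α1 y)) ∧
    (∀ x y z : k × k, μ (α1 x) (μ y z) = μ (μ x y) (α1 z)) := by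
  have hb : ∀ i, Module.Basis.finTwoProd k i = ![a1, a2] i := by
    intro i
    fin_cases i <;> simp [ha1, ha2, Module.Basis.finTwoProd_zero, Module.Basis.finTwoProd_one]
  constructor
  · refine LinearMap.map_mul_of_basis (Module.Basis.finTwoProd k) μ α1 fun i j => ?_
    simp only [hb]
    fin_cases i <;> fin_cases j <;> simp [h11, h12, h21, h22, hα1, hα2]
  · refine LinearMap.hom_assoc_of_basis (Module.Basis.finTwoProd k) μ α1 fun i j l => ?_
    simp only [hb]
    fin_cases i <;> fin_cases j <;> fin_cases l <;> simp [h11, h12, h21, h22, hα1, hα2]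
end

section
/- Let (L, [.,.]) be a Lie algebra with a derivation-compatible structure: suppose d : L → L is linear with d[x,y] = [dx,y] + [x,dy] and d∘d = 0, and α : L → L is a Lie algebra endomorphism (α[x,y] = [α(x),α(y)]) with α∘d = d∘α. Define a new bracket [x,y]_{d,α} := [α(x), d(α(y))]. Then (L, [.,.]_{d,α}, α) is a Hom-Leibniz algebra, i.e., [α(x),[y,z]_{d,α}]_{d,α} = [[x,y]_{d,α}, α(z)]_{d,α} − [[x,z]_{d,α}, α(y)]_{d,α} for all x,y,z in L. -/
/-!
Writing `X = α² x`, `Y = α² y`, `Z = α² z`, the compatibilities of `α` with the bracket and with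
`d`, together with `d² = 0`, reduce all three twisted brackets to brackets of `X`, `d Y`, `d Z`.
The identity becomes `[X, [dY, dZ]] = [[X, dY], dZ] - [[X, dZ], dY]`, which is the Jacobi
identity of `L` written in Leibniz form.
-/

section

variable {R L : Type*} [CommRing R] [AddCommGroup L] [Module R L]

theorem LinearMap.leibniz_of_skew_of_jacobi (br : L →ₗ[R] L →ₗ[R] L)
    (hskew : ∀ x y : L, br x y = - br y x)
    (hjac : ∀ x y z : L, br (br x y) z + br (br y z) x + br (br z x) y = 0) (x y z : L) :
    br x (br y z) = br (br x y) z - br (br x z) y := by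
  have h := hjac x y z
  rw [hskew (br y z), hskew z x, map_neg, LinearMap.neg_apply] at h
  linear_combination (norm := abel) -h

def homDerivedBracket (br : L →ₗ[R] L →ₗ[R] L) (d α : L →ₗ[R] L) (x y : L) : L :=
  br (α x) (d (α y))

variable {br : L →ₗ[R] L →ₗ[R] L} {d α : L →ₗ[R] L}

theorem homDerivedBracket_homDerivedBracket_map
    (hα : ∀ x y : L, α (br x y) = br (α x) (α y)) (hαd : ∀ x : L, α (d x) = d (α x))
    (x y z : L) :
    homDerivedBracket br d α (homDerivedBracket br d α x y) (α z) =
      br (br (α (α x)) (d (α (α y)))) (d (α (α z))) := by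
  simp only [homDerivedBracket, hα, hαd]

theorem homDerivedBracket_map_homDerivedBracket
    (hd : ∀ x y : L, d (br x y) = br (d x) y + br x (d y)) (hd2 : ∀ x : L, d (d x) = 0)
    (hα : ∀ x y : L, α (br x y) = br (α x) (α y)) (hαd : ∀ x : L, α (d x) = d (α x))
    (x y z : L) :
    homDerivedBracket br d α (α x) (homDerivedBracket br d α y z) =
      br (α (α x)) (br (d (α (α y))) (d (α (α z)))) := by
  simp only [homDerivedBracket, hα, hαd, hd, hd2, map_zero, add_zero]

end

/-- If `(L,[.,.])` is a Lie algebra, `d` a differential (derivation with `d² = 0`),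
and `α` a Lie endomorphism commuting with `d`, then the bracket
`[x,y]_{d,α} = [α(x), d(α(y))]` makes `L` a Hom-Leibniz algebra. -/
theorem diff_lie_homLeibniz (k L : Type*) [Field k] [AddCommGroup L] [Module k L]
    (br : L →ₗ[k] L →ₗ[k] L) (d : L →ₗ[k] L) (α : L →ₗ[k] L)
    (hskew : ∀ x y : L, br x y = - br y x)
    (hjac : ∀ x y z : L, br (br x y) z + br (br y z) x + br (br z x) y = 0)
    (hd : ∀ x y : L, d (br x y) = br (d x) y + br x (d y))
    (hd2 : ∀ x : L, d (d x) = 0)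
    (hα : ∀ x y : L, α (br x y) = br (α x) (α y))
    (hαd : ∀ x : L, α (d x) = d (α x))
    (b : L → L → L) (hb : ∀ x y : L, b x y = br (α x) (d (α y))) :
    ∀ x y z : L, b (α x) (b y z) = b (b x y) (α z) - b (b x z) (α y) := by
  obtain rfl : b = homDerivedBracket br d α := funext₂ hb
  intro x y z
  rw [homDerivedBracket_map_homDerivedBracket hd hd2 hα hαd,
    homDerivedBracket_homDerivedBracket_map hα hαd, homDerivedBracket_homDerivedBracket_map hα hαd]
  exact br.leibniz_of_skew_of_jacobi hskew hjac _ _ _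
end

section
/- Let (L, [.,.], α) be a Hom-Leibniz algebra and (R, ·, α1) a Hom-Zinbiel algebra. On the tensor product L ⊗ R define the bracket [x⊗r, y⊗s] := [x,y]⊗(r·s) − [y,x]⊗(s·r) and the linear map α⊗α1. Then (L⊗R, [.,.], α⊗α1) is a Hom-Lie algebra: the bracket is skew-symmetric and satisfies the Hom-Jacobi identity. -/
/-!
Skew-symmetry and the Hom-Jacobi identity are (tri)linear conditions, so it suffices to check them
on pure tensors. Skew-symmetry is visible from the formula for the bracket. For the Jacobiator of
`x ⊗ r, y ⊗ s, z ⊗ t`, expand the twelve terms, rewrite `[α z, [x, y]]` (and its cyclic variants)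
by the Hom-Leibniz identity and `(r·s)·α1 t` by the Hom-Zinbiel identity: everything then cancels
in pairs.
-/

open scoped TensorProduct

section HomJacobiator

variable {k M : Type*} [CommRing k] [AddCommGroup M] [Module k M]

def homJacobiator (B : M →ₗ[k] M →ₗ[k] M) (φ : M →ₗ[k] M) : M →ₗ[k] M →ₗ[k] M →ₗ[k] M :=
  LinearMap.mk₂ k
    (fun u v => B.compl₂ φ (B u v) + B.flip (φ u) ∘ₗ B v + B.flip (φ v) ∘ₗ B.flip u)
    (fun u₁ u₂ v => by
      ext w
      simp only [map_add, LinearMap.add_apply, LinearMap.compl₂_apply, LinearMap.coe_comp,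
        Function.comp_apply, LinearMap.flip_apply]
      abel)
    (fun c u v => by ext w; simp [smul_add])
    (fun u v₁ v₂ => by
      ext w
      simp only [map_add, LinearMap.add_apply, LinearMap.compl₂_apply, LinearMap.coe_comp,
        Function.comp_apply, LinearMap.flip_apply]
      abel)
    (fun c u v => by ext w; simp [smul_add])

@[simp]
theorem homJacobiator_apply (B : M →ₗ[k] M →ₗ[k] M) (φ : M →ₗ[k] M) (u v w : M) :
    homJacobiator B φ u v w = B (B u v) (φ w) + B (B v w) (φ u) + B (B w u) (φ v) :=
  rfl

end HomJacobiator

namespace TensorProduct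

variable {k M N P : Type*} [CommRing k] [AddCommGroup M] [Module k M] [AddCommGroup N]
  [Module k N] [AddCommGroup P] [Module k P]

theorem eq_neg_flip_of_tmul (B : M ⊗[k] N →ₗ[k] M ⊗[k] N →ₗ[k] P)
    (h : ∀ (x y : M) (r s : N), B (x ⊗ₜ r) (y ⊗ₜ s) = -B (y ⊗ₜ s) (x ⊗ₜ r)) :
    B = -B.flip :=
  ext' fun x r => ext' fun y s => h x y r s

theorem homJacobiator_eq_zero_of_tmul (B : M ⊗[k] N →ₗ[k] M ⊗[k] N →ₗ[k] M ⊗[k] N)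
    (φ : M ⊗[k] N →ₗ[k] M ⊗[k] N)
    (h : ∀ (x y z : M) (r s t : N), homJacobiator B φ (x ⊗ₜ r) (y ⊗ₜ s) (z ⊗ₜ t) = 0) :
    homJacobiator B φ = 0 :=
  ext' fun x r => ext' fun y s => ext' fun z t => h x y z r s t

end TensorProduct

section HomLeibnizTensorHomZinbiel

variable {k L R : Type*} [CommRing k] [AddCommGroup L] [Module k L] [AddCommGroup R] [Module k R]
  {br : L →ₗ[k] L →ₗ[k] L} {mul : R →ₗ[k] R →ₗ[k] R} {B : L ⊗[k] R →ₗ[k] L ⊗[k] R →ₗ[k] L ⊗[k] R}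

theorem tensorBracket_eq_neg_flip
    (hB : ∀ (x y : L) (r s : R), B (x ⊗ₜ r) (y ⊗ₜ s) = br x y ⊗ₜ mul r s - br y x ⊗ₜ mul s r) :
    B = -B.flip :=
  TensorProduct.eq_neg_flip_of_tmul B fun x y r s => by rw [hB, hB, neg_sub]

theorem homJacobiator_tensorBracket_tmul {α : L →ₗ[k] L} {α1 : R →ₗ[k] R}
    (hleib : ∀ x y z : L, br (α x) (br y z) = br (br x y) (α z) - br (br x z) (α y))
    (hzin : ∀ r s t : R, mul (mul r s) (α1 t) = mul (α1 r) (mul s t) + mul (α1 r) (mul t s))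
    (hB : ∀ (x y : L) (r s : R), B (x ⊗ₜ r) (y ⊗ₜ s) = br x y ⊗ₜ mul r s - br y x ⊗ₜ mul s r)
    (x y z : L) (r s t : R) :
    homJacobiator B (TensorProduct.map α α1) (x ⊗ₜ r) (y ⊗ₜ s) (z ⊗ₜ t) = 0 := by
  simp only [homJacobiator_apply, TensorProduct.map_tmul, hB, map_sub, LinearMap.sub_apply,
    hleib, hzin, TensorProduct.sub_tmul, TensorProduct.tmul_add]
  abel

end HomLeibnizTensorHomZinbiel

/-- The tensor product of a Hom-Leibniz algebra with a Hom-Zinbiel algebra, with bracket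
`[x⊗r, y⊗s] = [x,y]⊗(r·s) − [y,x]⊗(s·r)` and structure map `α ⊗ α1`, is a Hom-Lie algebra. -/
theorem homLeibniz_tensor_homZinbiel (k L R : Type*) [Field k]
    [AddCommGroup L] [Module k L] [AddCommGroup R] [Module k R]
    (br : L →ₗ[k] L →ₗ[k] L) (α : L →ₗ[k] L)
    (hleib : ∀ x y z : L, br (α x) (br y z) = br (br x y) (α z) - br (br x z) (α y))
    (mul : R →ₗ[k] R →ₗ[k] R) (α1 : R →ₗ[k] R)
    (hzin : ∀ r s t : R, mul (mul r s) (α1 t) = mul (α1 r) (mul s t) + mul (α1 r) (mul t s))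
    (B : (L ⊗[k] R) →ₗ[k] (L ⊗[k] R) →ₗ[k] (L ⊗[k] R))
    (hB : ∀ (x y : L) (r s : R),
      B (x ⊗ₜ r) (y ⊗ₜ s) = br x y ⊗ₜ mul r s - br y x ⊗ₜ mul s r) :
    (∀ u v : L ⊗[k] R, B u v = - B v u) ∧
    (∀ u v w : L ⊗[k] R,
      B (B u v) (TensorProduct.map α α1 w) + B (B v w) (TensorProduct.map α α1 u) +
        B (B w u) (TensorProduct.map α α1 v) = 0) := by
  have hskew := tensorBracket_eq_neg_flip hB
  have hjacobi := TensorProduct.homJacobiator_eq_zero_of_tmul B (TensorProduct.map α α1)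
    (homJacobiator_tensorBracket_tmul hleib hzin hB)
  refine ⟨fun u v => ?_, fun u v w => ?_⟩
  · simpa using LinearMap.congr_fun₂ hskew u v
  · simpa using LinearMap.congr_fun₂ (LinearMap.congr_fun hjacobi u) v w
end

section
/- Let (R, ·, α1) be a Hom-Zinbiel algebra. Define x ∗ y := x·y + y·x. Then (R, ∗, α1) is a Hom-associative and commutative algebra: x ∗ y = y ∗ x and α1(x) ∗ (y ∗ z) = (x ∗ y) ∗ α1(z) for all x, y, z in R. -/
/-! The Hom-Zinbiel identity says `(x·y)·α z = α x·(y ∗ z)`. Using it on every term whose left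
factor is a product, both `α x ∗ (y ∗ z)` and `(x ∗ y) ∗ α z` expand to
`(x·y)·α z + α y·(x ∗ z) + α z·(x ∗ y)`. -/

theorem homZinbiel_symm_homAssoc {k R : Type*} [CommSemiring k] [AddCommMonoid R] [Module k R]
    (mul : R →ₗ[k] R →ₗ[k] R) (α : R →ₗ[k] R)
    (hzin : ∀ x y z : R, mul (mul x y) (α z) = mul (α x) (mul y z) + mul (α x) (mul z y))
    (x y z : R) :
    mul (α x) (mul y z + mul z y) + mul (mul y z + mul z y) (α x) =
      mul (mul x y + mul y x) (α z) + mul (α z) (mul x y + mul y x) := by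
  simp only [map_add, LinearMap.add_apply, hzin]
  abel

/-- The symmetrization `x ∗ y = x·y + y·x` of a Hom-Zinbiel product is
Hom-associative and commutative. -/
theorem homZinbiel_symmetrization (k R : Type*) [Field k] [AddCommGroup R] [Module k R]
    (mul : R →ₗ[k] R →ₗ[k] R) (α1 : R →ₗ[k] R)
    (hzin : ∀ x y z : R, mul (mul x y) (α1 z) = mul (α1 x) (mul y z) + mul (α1 x) (mul z y))
    (star : R → R → R) (hstar : ∀ x y : R, star x y = mul x y + mul y x) :
    (∀ x y : R, star x y = star y x) ∧
    (∀ x y z : R, star (α1 x) (star y z) = star (star x y) (α1 z)) := by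
  refine ⟨fun x y => by rw [hstar, hstar, add_comm], fun x y z => ?_⟩
  simp only [hstar]
  exact homZinbiel_symm_homAssoc mul α1 hzin x y z
end
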